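/- Let A be a nonzero commutative radical complex Banach algebra and let A_e be its unitization with the norm ‖a + λe‖₁ = ‖a‖ + |λ|. If every extreme point of D(A_e, e) were multiplicative, then the weak*-closed convex hull of the set of extreme points of D(A_e, e) would equal the singleton {φ_∞} (where φ_∞(a + λe) = λ), which is strictly contained in D(A_e, e); hence the hypothesis contradicts the Krein–Milman theorem. -/

import Mathlib

open Unitization WithLp

/-- The element `a` of `A`, viewed as the element `a + 0·e` of the unitization
`A_e = WithLp 1 (Unitization ℂ A)` equipped with the norm `‖a + λe‖₁ = ‖a‖ + |λ|`. -/
noncomputable def inrL1 {A : Type*} [NonUnitalNormedRing A] [NormedSpace ℂ A] (a : A) :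
    WithLp 1 (Unitization ℂ A) :=
  (WithLp.equiv 1 (Unitization ℂ A)).symm (Unitization.inr a)

/-- The functional `φ∞ : a + λ·e ↦ λ` on the ℓ¹-unitization, as a continuous linear map. -/
noncomputable def phiInf (A : Type*) [NonUnitalNormedRing A] [NormedSpace ℂ A]
    [IsScalarTower ℂ A A] [SMulCommClass ℂ A A] :
    WithLp 1 (Unitization ℂ A) →L[ℂ] ℂ :=
  LinearMap.mkContinuous
    ((Unitization.fstHom ℂ A).toLinearMap ∘ₗ (WithLp.linearEquiv 1 ℂ (Unitization ℂ A)).toLinearMap)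
    1
    (fun x => by
      rw [one_mul, WithLp.unitization_norm_def]
      simpa using le_add_of_nonneg_right (norm_nonneg _))

open NormedSpace

/-! A multiplicative state `χ` on `A_e` is a character, so `χ (inrL1 a)` lies in the spectrum of
`inrL1 a`, i.e. in the quasispectrum `{0}` of `a`; hence `χ = φ∞`. If every extreme point of the
weak*-compact convex set `D(A_e, e)` were multiplicative, Krein–Milman would force
`D(A_e, e) = {φ∞}`. But for `a ≠ 0` and a Hahn–Banach functional `g` with `‖g‖ ≤ 1`,
`g a = ‖a‖`, the functional `b + λe ↦ λ + g b` is another normalized state: the ℓ¹ norm keeps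
its norm at most `1`. -/

-- Instance search does not unfold `WeakDual` to the `WeakBilin` it is defined as.
instance WeakDual.instLocallyConvexSpaceReal {𝕜 E : Type*} [RCLike 𝕜] [NormedAddCommGroup E]
    [NormedSpace 𝕜 E] : LocallyConvexSpace ℝ (WeakDual 𝕜 E) :=
  inferInstanceAs (LocallyConvexSpace ℝ (WeakBilin (topDualPairing 𝕜 E)))

namespace WeakDual

section NormalizedStates

variable (𝕜 B : Type*) [RCLike 𝕜] [NormedRing B] [NormedSpace 𝕜 B]

def normalizedStates : Set (WeakDual 𝕜 B) :=
  {f | f 1 = 1 ∧ ‖toStrongDual f‖ = 1}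

variable {𝕜 B} [NormOneClass B]

theorem one_le_norm_toStrongDual {f : WeakDual 𝕜 B} (hf : f 1 = 1) : 1 ≤ ‖toStrongDual f‖ :=
  calc (1 : ℝ) = ‖f 1‖ := by rw [hf, norm_one]
    _ ≤ ‖toStrongDual f‖ * ‖(1 : B)‖ := (toStrongDual f).le_opNorm 1
    _ = ‖toStrongDual f‖ := by rw [norm_one, mul_one]

theorem mem_normalizedStates_iff {f : WeakDual 𝕜 B} :
    f ∈ normalizedStates 𝕜 B ↔ f 1 = 1 ∧ ‖toStrongDual f‖ ≤ 1 :=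
  and_congr_right fun hf => ⟨le_of_eq, fun h => h.antisymm (one_le_norm_toStrongDual hf)⟩

theorem _root_.StrongDual.toWeakDual_mem_normalizedStates_iff {φ : StrongDual 𝕜 B} :
    StrongDual.toWeakDual φ ∈ normalizedStates 𝕜 B ↔ φ 1 = 1 ∧ ‖φ‖ ≤ 1 :=
  mem_normalizedStates_iff

theorem normalizedStates_eq_inter :
    normalizedStates 𝕜 B = {f | f 1 = 1} ∩ toStrongDual ⁻¹' Metric.closedBall 0 1 := by
  ext f
  simp [mem_normalizedStates_iff]

theorem isCompact_normalizedStates : IsCompact (normalizedStates 𝕜 B) := by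
  rw [normalizedStates_eq_inter]
  exact (isCompact_closedBall 0 1).inter_left (isClosed_eq (eval_continuous 1) continuous_const)

theorem convex_normalizedStates : Convex ℝ (normalizedStates 𝕜 B) := by
  intro f hf g hg a b ha hb hab
  rw [mem_normalizedStates_iff] at hf hg ⊢
  constructor
  · show a • f 1 + b • g 1 = 1
    rw [hf.1, hg.1, RCLike.real_smul_eq_coe_mul, RCLike.real_smul_eq_coe_mul, ← add_mul, mul_one,
      ← RCLike.ofReal_add, hab, RCLike.ofReal_one]
  · calc ‖a • toStrongDual f + b • toStrongDual g‖
        ≤ a * ‖toStrongDual f‖ + b * ‖toStrongDual g‖ := by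
          refine (norm_add_le _ _).trans_eq ?_
          rw [norm_smul, norm_smul, Real.norm_of_nonneg ha, Real.norm_of_nonneg hb]
      _ ≤ a * 1 + b * 1 := by gcongr; exacts [hf.2, hg.2]
      _ = 1 := by rw [mul_one, mul_one, hab]

end NormalizedStates

end WeakDual

namespace WithLp

variable {𝕜 A : Type*} [NormedField 𝕜] [NonUnitalNormedRing A] [NormedSpace 𝕜 A]
  [IsScalarTower 𝕜 A A] [SMulCommClass 𝕜 A A]

@[simp]
theorem unitization_ofLp_one : ofLp (1 : WithLp 1 (Unitization 𝕜 A)) = 1 := rfl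

instance instUnitizationNormOneClass : NormOneClass (WithLp 1 (Unitization 𝕜 A)) where
  norm_one := by simp [unitization_norm_def]

end WithLp

section UnitizationL1

variable {A : Type*} [NonUnitalNormedRing A] [NormedSpace ℂ A]

@[simp]
theorem ofLp_inrL1 (a : A) : ofLp (inrL1 a) = (a : Unitization ℂ A) := rfl

noncomputable def sndL1 : WithLp 1 (Unitization ℂ A) →L[ℂ] A :=
  LinearMap.mkContinuous
    ((Unitization.sndHom ℂ ℂ A) ∘ₗ (WithLp.linearEquiv 1 ℂ (Unitization ℂ A)).toLinearMap) 1
    (fun x => by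
      rw [one_mul, unitization_norm_def]
      simp)

@[simp]
theorem sndL1_apply (x : WithLp 1 (Unitization ℂ A)) : sndL1 x = (ofLp x).snd := rfl

variable [IsScalarTower ℂ A A] [SMulCommClass ℂ A A]

@[simp]
theorem phiInf_apply (x : WithLp 1 (Unitization ℂ A)) : phiInf A x = (ofLp x).fst := rfl

theorem spectrum_inrL1 (a : A) : spectrum ℂ (inrL1 a) = quasispectrum ℂ a := by
  rw [show inrL1 a = (unitizationAlgEquiv ℂ).symm (a : Unitization ℂ A) from rfl,
    AlgEquiv.spectrum_eq, Unitization.quasispectrum_eq_spectrum_inr' ℂ ℂ a]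

theorem ext_inrL1 {M : Type*} [AddCommMonoid M] [Module ℂ M] [TopologicalSpace M]
    {f g : WithLp 1 (Unitization ℂ A) →L[ℂ] M} (h1 : f 1 = g 1)
    (hinr : ∀ a, f (inrL1 a) = g (inrL1 a)) : f = g := by
  ext x
  have hx : x = inrL1 (ofLp x).snd + (ofLp x).fst • 1 := by
    apply (WithLp.equiv 1 _).injective
    ext <;> simp
  rw [hx, map_add, map_add, map_smul, map_smul, h1, hinr]

theorem eq_phiInf_of_map_mul (hrad : ∀ a : A, quasispectrum ℂ a = {0})
    (f : WithLp 1 (Unitization ℂ A) →L[ℂ] ℂ) (h1 : f 1 = 1)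
    (hmul : ∀ x y, f (x * y) = f x * f y) :
    f = phiInf A := by
  let χ : WithLp 1 (Unitization ℂ A) →ₐ[ℂ] ℂ := AlgHom.ofLinearMap f.toLinearMap h1 hmul
  refine ext_inrL1 (by simpa using h1) fun a => ?_
  have hspec := AlgHom.apply_mem_spectrum χ (inrL1 a)
  rw [spectrum_inrL1, hrad] at hspec
  simpa [χ] using hspec

open WeakDual

theorem phiInf_add_comp_sndL1_mem_normalizedStates {g : StrongDual ℂ A} (hg : ‖g‖ ≤ 1) :
    StrongDual.toWeakDual (phiInf A + g.comp sndL1) ∈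
      normalizedStates ℂ (WithLp 1 (Unitization ℂ A)) := by
  rw [StrongDual.toWeakDual_mem_normalizedStates_iff]
  refine ⟨by simp, ?_⟩
  refine ContinuousLinearMap.opNorm_le_bound _ zero_le_one fun x => ?_
  calc ‖(ofLp x).fst + g (ofLp x).snd‖ ≤ ‖(ofLp x).fst‖ + ‖g‖ * ‖(ofLp x).snd‖ :=
        (norm_add_le _ _).trans (by gcongr; exact g.le_opNorm _)
    _ ≤ 1 * ‖x‖ := by
        rw [one_mul, unitization_norm_def]
        gcongr
        exact mul_le_of_le_one_left (norm_nonneg _) hg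

theorem phiInf_mem_normalizedStates :
    StrongDual.toWeakDual (phiInf A) ∈ normalizedStates ℂ (WithLp 1 (Unitization ℂ A)) := by
  simpa using phiInf_add_comp_sndL1_mem_normalizedStates (g := 0) (by simp)

theorem exists_mem_normalizedStates_ne_phiInf [Nontrivial A] :
    ∃ f ∈ normalizedStates ℂ (WithLp 1 (Unitization ℂ A)),
      f ≠ StrongDual.toWeakDual (phiInf A) := by
  obtain ⟨a, ha⟩ := exists_ne (0 : A)
  obtain ⟨g, hg, hga⟩ := exists_dual_vector'' ℂ a
  refine ⟨_, phiInf_add_comp_sndL1_mem_normalizedStates hg, fun heq => ha ?_⟩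
  have hval := DFunLike.congr_fun ((StrongDual.toWeakDual_inj _ _).1 heq) (inrL1 a)
  simpa [hga] using hval

end UnitizationL1

theorem multiplicative_extreme_states_contradicts_kreinMilman_general
    {A : Type*} [NonUnitalNormedCommRing A] [NormedSpace ℂ A]
    [IsScalarTower ℂ A A] [SMulCommClass ℂ A A] [Nontrivial A]
    (hrad : ∀ a : A, quasispectrum ℂ a = {0})
    (h : ∀ f ∈ Set.extremePoints ℝ
        {f : WeakDual ℂ (WithLp 1 (Unitization ℂ A)) | f 1 = 1 ∧ ‖WeakDual.toStrongDual f‖ = 1},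
      ∀ x y : WithLp 1 (Unitization ℂ A), f (x * y) = f x * f y) :
    (closure (convexHull ℝ (Set.extremePoints ℝ
          {f : WeakDual ℂ (WithLp 1 (Unitization ℂ A)) |
            f 1 = 1 ∧ ‖WeakDual.toStrongDual f‖ = 1})) =
        {StrongDual.toWeakDual (phiInf A)} ∧
      {StrongDual.toWeakDual (phiInf A)} ⊂
        {f : WeakDual ℂ (WithLp 1 (Unitization ℂ A)) |
          f 1 = 1 ∧ ‖WeakDual.toStrongDual f‖ = 1}) ∧
    False := by
  change (closure (convexHull ℝ ((WeakDual.normalizedStates ℂ _).extremePoints ℝ)) = _ ∧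
    _ ⊂ WeakDual.normalizedStates ℂ _) ∧ False
  set D := WeakDual.normalizedStates ℂ (WithLp 1 (Unitization ℂ A))
  have hext : D.extremePoints ℝ ⊆ {StrongDual.toWeakDual (phiInf A)} := fun f hf =>
    eq_phiInf_of_map_mul hrad (WeakDual.toStrongDual f) (extremePoints_subset hf).1 (h f hf)
  have hKM : closure (convexHull ℝ (D.extremePoints ℝ)) = D :=
    closure_convexHull_extremePoints WeakDual.isCompact_normalizedStates
      WeakDual.convex_normalizedStates
  have hhull : closure (convexHull ℝ (D.extremePoints ℝ)) = {StrongDual.toWeakDual (phiInf A)} :=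
    (closure_minimal (convexHull_min hext (convex_singleton _)) isClosed_singleton).antisymm
      (by rw [hKM, Set.singleton_subset_iff]; exact phiInf_mem_normalizedStates)
  have hproper : {StrongDual.toWeakDual (phiInf A)} ⊂ D := by
    obtain ⟨f, hfD, hf⟩ := exists_mem_normalizedStates_ne_phiInf (A := A)
    exact Set.ssubset_iff_subset_ne.2 ⟨Set.singleton_subset_iff.2 phiInf_mem_normalizedStates,
      fun heq => hf (heq.symm.subset hfD)⟩
  exact ⟨⟨hhull, hproper⟩, hproper.ne (hhull.symm.trans hKM)⟩

/-- Let `A` be a nonzero commutative radical complex Banach algebra and `A_e` its unitization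
with the norm `‖a + λe‖₁ = ‖a‖ + |λ|`.  Regard the set `D(A_e, e)` of normalized states as a
subset of the weak-star dual of `A_e`.  If every extreme point of `D(A_e, e)` were
multiplicative, then the weak-star closed convex hull of the set of extreme points of
`D(A_e, e)` would equal the singleton `{φ∞}` (where `φ∞(a + λe) = λ`), which is strictly
contained in `D(A_e, e)`; this contradicts the Krein–Milman theorem, so the hypothesis is
absurd. -/
theorem multiplicative_extreme_states_contradicts_kreinMilman
    {A : Type*} [NonUnitalNormedCommRing A] [NormedSpace ℂ A]
    [IsScalarTower ℂ A A] [SMulCommClass ℂ A A] [CompleteSpace A] [Nontrivial A]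
    (hrad : ∀ a : A, quasispectrum ℂ a = {0})
    (h : ∀ f ∈ Set.extremePoints ℝ
        {f : WeakDual ℂ (WithLp 1 (Unitization ℂ A)) | f 1 = 1 ∧ ‖WeakDual.toStrongDual f‖ = 1},
      ∀ x y : WithLp 1 (Unitization ℂ A), f (x * y) = f x * f y) :
    (closure (convexHull ℝ (Set.extremePoints ℝ
          {f : WeakDual ℂ (WithLp 1 (Unitization ℂ A)) |
            f 1 = 1 ∧ ‖WeakDual.toStrongDual f‖ = 1})) =
        {StrongDual.toWeakDual (phiInf A)} ∧
      {StrongDual.toWeakDual (phiInf A)} ⊂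
        {f : WeakDual ℂ (WithLp 1 (Unitization ℂ A)) |
          f 1 = 1 ∧ ‖WeakDual.toStrongDual f‖ = 1}) ∧
    False :=
  multiplicative_extreme_states_contradicts_kreinMilman_general hrad h
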